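/- arXiv:2308.14290 — 3 statements merged into one kernel-verified Lean document; each statement's English description precedes it below -/
import Mathlib

section
/- Let h be the function on (0,π)² given by the series h(x,y) = (4/π)·Σ_{k=0}^∞ (sin((2k+1)x)/(2k+1))·(F_{2k+1}(y) − coth((2k+1)π)·G_{2k+1}(y)). Then cot(π/4) − h_x(π/4,π/4)/h(π/4,π/4) > 0, where h_x denotes the partial derivative of h in its first variable. -/
open Real Filter Set Topology

/-- Hyperbolic cotangent. -/
noncomputable def coth (t : ℝ) : ℝ := Real.cosh t / Real.sinh t

/-- `F n y = cosh (n y) + cosh (n (π − y))`. -/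
noncomputable def F (n y : ℝ) : ℝ := Real.cosh (n * y) + Real.cosh (n * (π - y))

/-- `G n y = sinh (n y) + sinh (n (π − y))`. -/
noncomputable def G (n y : ℝ) : ℝ := Real.sinh (n * y) + Real.sinh (n * (π - y))

/-- The harmonic function `h` on `(0,π)²` given by its Fourier series. -/
noncomputable def h (x y : ℝ) : ℝ :=
  (4 / π) * ∑' k : ℕ, (Real.sin ((2 * k + 1) * x) / (2 * k + 1)) *
    (F (2 * k + 1) y - coth ((2 * k + 1) * π) * G (2 * k + 1) y)

/-- Partial derivative of `h` in its first variable. -/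
noncomputable def hx (x y : ℝ) : ℝ := deriv (fun x' => h x' y) x

/-!
On the line `y = π / 4` the hyperbolic coefficients collapse: with `n = 2k + 1`,
`F n y - coth (n π) G n y = cosh (n (y - π/2)) / cosh (n π/2)`, so
`h (x, π/4) = (4/π) ∑ sin (n x) / n · c_k` with `c_k = cosh (n π/4) / cosh (n π/2)`, and
`c_k` lies between `r ^ n / 2` and `2 r ^ n` for `r = e^{-π/4} ≤ 1/2`. Differentiating termwise
and using `cot (π/4) = 1`, the claim is `h_x < h` at `(π/4, π/4)` together with `h > 0` there.
Both are sums of the form `∑ b_k c_k` whose first terms are explicit (`sin, cos (n π/4) = ±√2/2`)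
and dominate a geometric tail of ratio `r ^ 2 ≤ 1/4`: for `h` the `k = 0` term does it, for
`h - h_x` the `k = 0` term vanishes and the `k = 1` term does it.
-/

theorem F_sub_coth_mul_G {n : ℝ} (hn : n ≠ 0) (y : ℝ) :
    F n y - coth (n * π) * G n y = cosh (n * (y - π / 2)) / cosh (n * (π / 2)) := by
  set m := n * (π / 2)
  set d := n * (y - π / 2)
  have hsinh : sinh m ≠ 0 := by simpa [m] using And.intro hn pi_ne_zero
  have hcosh : cosh m ≠ 0 := (cosh_pos _).ne'
  rw [F, G, coth, show n * y = m + d by ring, show n * (π - y) = m - d by ring,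
    show n * π = 2 * m by ring]
  simp only [cosh_add, cosh_sub, sinh_add, sinh_sub, cosh_two_mul, sinh_two_mul]
  field_simp
  linear_combination (2 * cosh d * sinh m) * cosh_sq m

theorem exp_neg_div_two_le_cosh_div_cosh_two_mul {t : ℝ} (ht : 0 ≤ t) :
    exp (-t) / 2 ≤ cosh t / cosh (2 * t) := by
  have h1 : exp t / 2 ≤ cosh t := by rw [cosh_eq]; linarith [exp_pos (-t)]
  have h2 : cosh (2 * t) ≤ exp (2 * t) := by
    rw [cosh_eq]; linarith [exp_le_exp.2 (show -(2 * t) ≤ 2 * t by linarith)]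
  rw [div_le_div_iff₀ two_pos (cosh_pos _)]
  calc exp (-t) * cosh (2 * t) ≤ exp (-t) * exp (2 * t) := by gcongr
    _ = exp t := by rw [← exp_add]; ring_nf
    _ ≤ cosh t * 2 := by linarith

theorem cosh_div_cosh_two_mul_le {t : ℝ} (ht : 0 ≤ t) :
    cosh t / cosh (2 * t) ≤ 2 * exp (-t) := by
  have h1 : cosh t ≤ exp t := by
    rw [cosh_eq]; linarith [exp_le_exp.2 (show -t ≤ t by linarith)]
  have h2 : exp (2 * t) / 2 ≤ cosh (2 * t) := by rw [cosh_eq]; linarith [exp_pos (-(2 * t))]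
  rw [div_le_iff₀ (cosh_pos _)]
  calc cosh t ≤ exp t := h1
    _ = 2 * exp (-t) * (exp (2 * t) / 2) := by
      field_simp; rw [← exp_add]; ring_nf
    _ ≤ 2 * exp (-t) * cosh (2 * t) := by gcongr

theorem abs_sin_odd_mul_div_le_one (k : ℕ) (x : ℝ) :
    |sin ((2 * k + 1) * x) / (2 * k + 1)| ≤ 1 := by
  have hn : (0 : ℝ) < 2 * k + 1 := by positivity
  rw [abs_div, abs_of_pos hn]
  exact div_le_one_of_le₀ (by linarith [abs_sin_le_one ((2 * k + 1) * x),
    (Nat.cast_nonneg k : (0 : ℝ) ≤ k)]) hn.le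

theorem hasDerivAt_tsum_sin_odd_div_mul {a : ℕ → ℝ} (ha : Summable fun k => |a k|) (x : ℝ) :
    HasDerivAt (fun x => ∑' k : ℕ, sin ((2 * k + 1) * x) / (2 * k + 1) * a k)
      (∑' k : ℕ, cos ((2 * k + 1) * x) * a k) x := by
  refine hasDerivAt_tsum (y₀ := 0)
    (g := fun (k : ℕ) x => sin ((2 * k + 1) * x) / (2 * k + 1) * a k)
    (g' := fun (k : ℕ) x => cos ((2 * k + 1) * x) * a k) ha (fun k x => ?_) (fun k x => ?_) ?_ x
  · have hn : (2 * k + 1 : ℝ) ≠ 0 := by positivity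
    have h := (((hasDerivAt_id x).const_mul (2 * k + 1 : ℝ)).sin.div_const (2 * k + 1)).mul_const
      (a k)
    simpa only [id, mul_one, mul_div_cancel_right₀ _ hn] using h
  · simpa [abs_mul] using mul_le_mul_of_nonneg_right (abs_cos_le_one _) (abs_nonneg (a k))
  · simp

theorem tsum_pos_of_abs_le_geometric {a : ℕ → ℝ} {B ρ : ℝ} (hρ₀ : 0 ≤ ρ) (hρ₁ : ρ < 1)
    (ha : ∀ k, |a k| ≤ B * ρ ^ k) (m : ℕ)
    (hm : B * ρ ^ m / (1 - ρ) < ∑ i ∈ Finset.range m, a i) : 0 < ∑' k, a k := by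
  have hgeom : HasSum (fun k => B * ρ ^ m * ρ ^ k) (B * ρ ^ m / (1 - ρ)) := by
    simpa [div_eq_mul_inv] using (hasSum_geometric_of_lt_one hρ₀ hρ₁).mul_left (B * ρ ^ m)
  have htail : |∑' k, a (k + m)| ≤ B * ρ ^ m / (1 - ρ) :=
    tsum_of_norm_bounded (f := fun k => a (k + m)) hgeom fun k => by
      simpa [pow_add, mul_assoc, mul_comm, mul_left_comm] using ha (k + m)
  have hsum : Summable a :=
    .of_norm_bounded ((summable_geometric_of_lt_one hρ₀ hρ₁).mul_left B) ha
  rw [← hsum.sum_add_tsum_nat_add m]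
  linarith [neg_abs_le (∑' k, a (k + m))]

theorem sin_three_mul_pi_div_four : sin (3 * (π / 4)) = √2 / 2 := by
  rw [show 3 * (π / 4) = π - π / 4 by ring, sin_pi_sub, sin_pi_div_four]

theorem cos_three_mul_pi_div_four : cos (3 * (π / 4)) = -(√2 / 2) := by
  rw [show 3 * (π / 4) = π - π / 4 by ring, cos_pi_sub, cos_pi_div_four]

theorem sin_five_mul_pi_div_four : sin (5 * (π / 4)) = -(√2 / 2) := by
  rw [show 5 * (π / 4) = π / 4 + π by ring, sin_add_pi, sin_pi_div_four]

theorem cos_five_mul_pi_div_four : cos (5 * (π / 4)) = -(√2 / 2) := by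
  rw [show 5 * (π / 4) = π / 4 + π by ring, cos_add_pi, cos_pi_div_four]

theorem one_point_four_lt_sqrt_two : (1.4 : ℝ) < √2 := by
  rw [lt_sqrt (by norm_num)]; norm_num

namespace h

noncomputable def r : ℝ := exp (-(π / 4))

noncomputable def coeff (k : ℕ) : ℝ :=
  F (2 * k + 1) (π / 4) - coth ((2 * k + 1) * π) * G (2 * k + 1) (π / 4)

theorem r_pos : 0 < r := exp_pos _

theorem r_le_half : r ≤ 1 / 2 := by
  rw [r, exp_neg, inv_le_comm₀ (exp_pos _) (by norm_num), one_div, inv_inv,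
    ← log_le_iff_le_exp two_pos]
  linarith [pi_gt_d2, log_two_lt_d9]

theorem r_sq_le_quarter : r ^ 2 ≤ 1 / 4 := by
  nlinarith [r_pos, r_le_half]

theorem exp_neg_odd_mul (k : ℕ) : exp (-((2 * k + 1) * (π / 4))) = r * (r ^ 2) ^ k := by
  rw [show -((2 * k + 1) * (π / 4)) = ((2 * k + 1 : ℕ) : ℝ) * -(π / 4) by push_cast; ring,
    exp_nat_mul, r, pow_succ, pow_mul, mul_comm]

theorem coeff_eq (k : ℕ) :
    coeff k = cosh ((2 * k + 1) * (π / 4)) / cosh (2 * ((2 * k + 1) * (π / 4))) := by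
  rw [coeff, F_sub_coth_mul_G (by positivity), ← cosh_neg]
  ring_nf

theorem half_mul_le_coeff (k : ℕ) : r * (r ^ 2) ^ k / 2 ≤ coeff k := by
  rw [coeff_eq, ← exp_neg_odd_mul]
  exact exp_neg_div_two_le_cosh_div_cosh_two_mul (by positivity)

theorem coeff_le (k : ℕ) : coeff k ≤ 2 * r * (r ^ 2) ^ k := by
  rw [coeff_eq, mul_assoc, ← exp_neg_odd_mul]
  exact cosh_div_cosh_two_mul_le (by positivity)

theorem coeff_nonneg (k : ℕ) : 0 ≤ coeff k :=
  le_trans (by have := r_pos; positivity) (half_mul_le_coeff k)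

theorem summable_abs_coeff : Summable fun k => |coeff k| := by
  have hr : r ^ 2 < 1 := by linarith [r_sq_le_quarter]
  refine .of_nonneg_of_le (fun k => abs_nonneg _) (fun k => ?_)
    ((summable_geometric_of_lt_one (sq_nonneg r) hr).mul_left (2 * r))
  rw [abs_of_nonneg (coeff_nonneg k)]
  exact coeff_le k

theorem abs_mul_coeff_le {b c : ℝ} (hb : |b| ≤ c) (k : ℕ) :
    |b * coeff k| ≤ c * (2 * r * (r ^ 2) ^ k) := by
  rw [abs_mul, abs_of_nonneg (coeff_nonneg k)]
  exact mul_le_mul hb (coeff_le k) (coeff_nonneg k) ((abs_nonneg b).trans hb)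

theorem summable_mul_coeff {b : ℕ → ℝ} (hb : ∀ k, |b k| ≤ 1) :
    Summable fun k => b k * coeff k :=
  .of_norm_bounded summable_abs_coeff fun k => by
    rw [norm_mul, Real.norm_eq_abs]
    exact mul_le_of_le_one_left (norm_nonneg _) (hb k)

theorem r_sq_sq_div_one_sub_r_sq_le : (r ^ 2) ^ 2 / (1 - r ^ 2) ≤ 1 / 12 := by
  have := r_sq_le_quarter
  rw [div_le_iff₀ (by linarith)]
  nlinarith [sq_nonneg r]

theorem eq_tsum_coeff (x : ℝ) :
    h x (π / 4) = 4 / π * ∑' k : ℕ, sin ((2 * k + 1) * x) / (2 * k + 1) * coeff k :=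
  rfl

theorem hx_eq_tsum_coeff (x : ℝ) :
    hx x (π / 4) = 4 / π * ∑' k : ℕ, cos ((2 * k + 1) * x) * coeff k :=
  ((hasDerivAt_tsum_sin_odd_div_mul summable_abs_coeff x).const_mul (4 / π)).deriv

theorem tsum_sin_mul_coeff_pos :
    0 < ∑' k : ℕ, sin ((2 * k + 1) * (π / 4)) / (2 * k + 1) * coeff k := by
  have hr := r_pos
  refine tsum_pos_of_abs_le_geometric (B := 2 * r) (sq_nonneg r)
    (by linarith [r_sq_le_quarter]) (fun k => ?_) 2 ?_
  · simpa using abs_mul_coeff_le (abs_sin_odd_mul_div_le_one k _) k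
  · simp only [Finset.sum_range_succ, Finset.sum_range_zero]
    norm_num [sin_three_mul_pi_div_four]
    have hc₀ : r / 2 ≤ coeff 0 := by simpa using half_mul_le_coeff 0
    calc 2 * r * (r ^ 2) ^ 2 / (1 - r ^ 2) ≤ 2 * r * (1 / 12) := by
          rw [mul_div_assoc]
          exact mul_le_mul_of_nonneg_left r_sq_sq_div_one_sub_r_sq_le (by positivity)
      _ < √2 / 2 * (r / 2) := by nlinarith [one_point_four_lt_sqrt_two]
      _ ≤ √2 / 2 * coeff 0 + √2 / 2 / 3 * coeff 1 := by
          nlinarith [coeff_nonneg 1, sqrt_nonneg 2]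

theorem tsum_cos_mul_coeff_lt :
    ∑' k : ℕ, cos ((2 * k + 1) * (π / 4)) * coeff k <
      ∑' k : ℕ, sin ((2 * k + 1) * (π / 4)) / (2 * k + 1) * coeff k := by
  have hr := r_pos
  rw [← sub_pos, ← (summable_mul_coeff (abs_sin_odd_mul_div_le_one · _)).tsum_sub
    (summable_mul_coeff fun k => abs_cos_le_one _)]
  refine tsum_pos_of_abs_le_geometric (B := 2 * (2 * r)) (sq_nonneg r)
    (by linarith [r_sq_le_quarter]) (fun k => ?_) 3 ?_
  · rw [← sub_mul, mul_assoc]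
    refine abs_mul_coeff_le ((abs_sub _ _).trans ?_) k
    linarith [abs_sin_odd_mul_div_le_one k (π / 4), abs_cos_le_one ((2 * k + 1) * (π / 4))]
  · simp only [Finset.sum_range_succ, Finset.sum_range_zero, ← sub_mul]
    norm_num [sin_three_mul_pi_div_four, cos_three_mul_pi_div_four, sin_five_mul_pi_div_four,
      cos_five_mul_pi_div_four]
    have hc₁ : r ^ 3 / 2 ≤ coeff 1 := by convert half_mul_le_coeff 1 using 2; ring
    calc 2 * (2 * r) * (r ^ 2) ^ 3 / (1 - r ^ 2)
          = 4 * r ^ 3 * ((r ^ 2) ^ 2 / (1 - r ^ 2)) := by ring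
      _ ≤ 4 * r ^ 3 * (1 / 12) :=
          mul_le_mul_of_nonneg_left r_sq_sq_div_one_sub_r_sq_le (by positivity)
      _ < (√2 / 2 / 3 + √2 / 2) * (r ^ 3 / 2) := by
          nlinarith [one_point_four_lt_sqrt_two, pow_pos hr 3]
      _ ≤ (√2 / 2 / 3 + √2 / 2) * coeff 1 + (-(√2 / 2) / 5 + √2 / 2) * coeff 2 := by
          nlinarith [coeff_nonneg 2, sqrt_nonneg 2]

end h

theorem stmt0 : Real.cot (π / 4) - hx (π / 4) (π / 4) / h (π / 4) (π / 4) > 0 := by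
  have hcot : cot (π / 4) = 1 := by
    rw [cot_eq_cos_div_sin, cos_pi_div_four, sin_pi_div_four, div_self (by positivity)]
  have hπ : 4 / π ≠ 0 := by positivity
  rw [hcot, h.hx_eq_tsum_coeff, h.eq_tsum_coeff, mul_div_mul_left _ _ hπ, gt_iff_lt, sub_pos]
  exact (div_lt_one h.tsum_sin_mul_coeff_pos).2 h.tsum_cos_mul_coeff_lt
end

section
/- Let h be the function on (0,π)² given by the series h(x,y) = (4/π)·Σ_{k=0}^∞ (sin((2k+1)x)/(2k+1))·(F_{2k+1}(y) − coth((2k+1)π)·G_{2k+1}(y)). Then 0.2485 < cot(π/4) − h_x(π/4,π/4)/h(π/4,π/4) < 0.2486, where h_x denotes the partial derivative of h in its first variable. -/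
open Real Filter Set Topology

/-!
At `y = π/4` the hyperbolic factor of the `k`-th term collapses: with `a = (2k+1)π/4` and
`u = e^a`, `cosh a + cosh 3a - coth 4a (sinh a + sinh 3a) = cosh a / cosh 2a = (u³+u)/(u⁴+1)`,
which is at most `4⁻ᵏ`. So `h(·, π/4)` is a sine series with geometrically decaying coefficients
that may be differentiated termwise, and at `x = π/4` every trigonometric factor is `±√2/2`.
Hence `h_x/h = D/S` for two explicit signed series, while `cot(π/4) = 1`. The claim becomes
`D - 0.7514 S > 0 > D - 0.7515 S`, which is checked on the first ten terms, using
`e^{π/4} ∈ (2.19327, 2.19329)` and the monotonicity of `u ↦ (u³+u)/(u⁴+1)`, plus a geometric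
bound on the tail.
-/

noncomputable def quarticRatio (u : ℝ) : ℝ := (u ^ 3 + u) / (u ^ 4 + 1)

theorem quarticRatio_nonneg {u : ℝ} (hu : 0 ≤ u) : 0 ≤ quarticRatio u := by
  unfold quarticRatio; positivity

theorem quarticRatio_le_two_div {u : ℝ} (hu : 0 < u) : quarticRatio u ≤ 2 / u := by
  rw [quarticRatio, div_le_div_iff₀ (by positivity) hu]
  nlinarith [sq_nonneg (u ^ 2 - 1), sq_nonneg u]

theorem quarticRatio_antitoneOn : AntitoneOn quarticRatio (Ici 1) := by
  intro u (hu : 1 ≤ u) v (hv : 1 ≤ v) huv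
  rw [quarticRatio, quarticRatio, div_le_div_iff₀ (by positivity) (by positivity)]
  have huv1 : 1 ≤ u * v := one_le_mul_of_one_le_of_one_le hu hv
  -- the difference of the two sides is `(v - u) * Q` with `Q` below
  have hQ : 0 ≤ (u * v) ^ 3 - 1 + (u * v - 1) * (u ^ 2 + u * v + v ^ 2) := by
    have hcube : 1 ≤ (u * v) ^ 3 := one_le_pow₀ huv1
    have hprod : 0 ≤ (u * v - 1) * (u ^ 2 + u * v + v ^ 2) := by
      apply mul_nonneg <;> nlinarith
    linarith
  nlinarith [mul_nonneg (sub_nonneg.2 huv) hQ]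

theorem cosh_add_cosh_three_mul_sub_coth_four_mul {a : ℝ} (ha : a ≠ 0) :
    cosh a + cosh (3 * a) - coth (4 * a) * (sinh a + sinh (3 * a)) = cosh a / cosh (2 * a) := by
  have hsum_cosh : cosh a + cosh (3 * a) = 2 * cosh (2 * a) * cosh a := by
    rw [show 3 * a = 2 * a + a by ring, cosh_add, cosh_two_mul, sinh_two_mul]
    linear_combination (-cosh a) * cosh_sq a
  have hsum_sinh : sinh a + sinh (3 * a) = 2 * sinh (2 * a) * cosh a := by
    rw [show 3 * a = 2 * a + a by ring, sinh_add, cosh_two_mul, sinh_two_mul]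
    linear_combination (-sinh a) * cosh_sq a
  have hS : sinh (2 * a) ≠ 0 := sinh_ne_zero.2 (by simpa using ha)
  have hC : cosh (2 * a) ≠ 0 := (cosh_pos _).ne'
  have hcosh4 : cosh (4 * a) = cosh (2 * a) ^ 2 + sinh (2 * a) ^ 2 := by
    rw [← cosh_two_mul]; ring_nf
  have hsinh4 : sinh (4 * a) = 2 * sinh (2 * a) * cosh (2 * a) := by
    rw [← sinh_two_mul]; ring_nf
  rw [hsum_cosh, hsum_sinh, coth, hcosh4, hsinh4]
  field_simp
  linear_combination cosh_sq (2 * a)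

theorem cosh_div_cosh_two_mul (a : ℝ) : cosh a / cosh (2 * a) = quarticRatio (exp a) := by
  rw [cosh_eq, cosh_eq, quarticRatio, exp_neg, exp_neg, show 2 * a = a + a by ring, exp_add]
  have := exp_pos a
  field_simp

theorem F_sub_coth_mul_G_pi_div_four {n : ℝ} (hn : n ≠ 0) :
    F n (π / 4) - coth (n * π) * G n (π / 4) = quarticRatio (exp (n * (π / 4))) := by
  have ha : n * (π / 4) ≠ 0 := mul_ne_zero hn (by positivity)
  rw [F, G, show n * (π - π / 4) = 3 * (n * (π / 4)) by ring,
    show n * π = 4 * (n * (π / 4)) by ring, cosh_add_cosh_three_mul_sub_coth_four_mul ha,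
    cosh_div_cosh_two_mul]

theorem exp_pi_div_four_mem_Ioo : exp (π / 4) ∈ Ioo 2.19327 2.19329 := by
  have hlo : 0.785398 < π / 4 := by linarith [pi_gt_d6]
  have hhi : π / 4 < 0.78539825 := by linarith [pi_lt_d6]
  constructor
  · calc (2.19327 : ℝ) < ∑ m ∈ Finset.range 10, (0.785398 : ℝ) ^ m / m.factorial := by
          norm_num [Finset.sum_range_succ, Nat.factorial]
      _ ≤ exp 0.785398 := sum_le_exp_of_nonneg (by norm_num) 10
      _ < exp (π / 4) := exp_lt_exp.2 hlo
  · calc exp (π / 4) < exp 0.78539825 := exp_lt_exp.2 hhi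
      _ ≤ ∑ m ∈ Finset.range 10, (0.78539825 : ℝ) ^ m / m.factorial
          + 0.78539825 ^ 10 * (10 + 1) / (Nat.factorial 10 * 10) :=
        exp_bound' (by norm_num) (by norm_num) (by norm_num)
      _ < 2.19329 := by norm_num [Finset.sum_range_succ, Nat.factorial]

noncomputable def hCoeff (k : ℕ) : ℝ := quarticRatio (exp (π / 4) ^ (2 * k + 1))

theorem F_sub_coth_mul_G_pi_div_four_eq_hCoeff (k : ℕ) :
    F (2 * k + 1) (π / 4) - coth ((2 * k + 1) * π) * G (2 * k + 1) (π / 4) = hCoeff k := by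
  rw [F_sub_coth_mul_G_pi_div_four (by positivity), hCoeff, ← exp_nat_mul]
  push_cast
  ring_nf

theorem hCoeff_nonneg (k : ℕ) : 0 ≤ hCoeff k :=
  quarticRatio_nonneg (by positivity)

theorem hCoeff_le (k : ℕ) : hCoeff k ≤ (1 / 4) ^ k := by
  have h2 : 2 ≤ exp (π / 4) := by linarith [exp_pi_div_four_mem_Ioo.1]
  calc hCoeff k ≤ 2 / exp (π / 4) ^ (2 * k + 1) := quarticRatio_le_two_div (by positivity)
    _ ≤ 2 / 2 ^ (2 * k + 1) := by gcongr
    _ = (1 / 4) ^ k := by rw [pow_succ, pow_mul, one_div_pow]; field_simp; norm_num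

theorem hCoeff_mem_Icc (k : ℕ) :
    hCoeff k ∈
      Icc (quarticRatio (2.19329 ^ (2 * k + 1))) (quarticRatio (2.19327 ^ (2 * k + 1))) := by
  obtain ⟨hlo, hhi⟩ := exp_pi_div_four_mem_Ioo
  have h1 : (1 : ℝ) ≤ 2.19327 ^ (2 * k + 1) := one_le_pow₀ (by norm_num)
  have h1' : (1 : ℝ) ≤ 2.19329 ^ (2 * k + 1) := one_le_pow₀ (by norm_num)
  have hE : (1 : ℝ) ≤ exp (π / 4) ^ (2 * k + 1) := h1.trans (by gcongr)
  exact ⟨quarticRatio_antitoneOn hE h1' (by gcongr), quarticRatio_antitoneOn h1 hE (by gcongr)⟩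

theorem hasDerivAt_tsum_sin_mul_div {ω a u : ℕ → ℝ} (hω : ∀ k, ω k ≠ 0) (hu : Summable u)
    (ha : ∀ k, |a k| ≤ u k) (x : ℝ) :
    HasDerivAt (fun x => ∑' k, sin (ω k * x) / ω k * a k) (∑' k, cos (ω k * x) * a k) x := by
  refine hasDerivAt_tsum (g := fun k x => sin (ω k * x) / ω k * a k)
    (g' := fun k x => cos (ω k * x) * a k) hu (fun k y => ?_) (fun k y => ?_) (y₀ := 0) ?_ x
  · have hlin : HasDerivAt (fun x => ω k * x) (ω k) y := by
      simpa using (hasDerivAt_id y).const_mul (ω k)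
    have := (hlin.sin.div_const (ω k)).mul_const (a k)
    rwa [mul_div_cancel_right₀ _ (hω k)] at this
  · rw [norm_mul, norm_eq_abs, norm_eq_abs]
    exact (mul_le_of_le_one_left (abs_nonneg _) (abs_cos_le_one _)).trans (ha k)
  · simp

theorem summable_geometric_quarter : Summable fun k : ℕ => (1 / 4 : ℝ) ^ k :=
  summable_geometric_of_lt_one (by norm_num) (by norm_num)

theorem h_pi_div_four (x : ℝ) :
    h x (π / 4) = 4 / π * ∑' k : ℕ, sin ((2 * k + 1) * x) / (2 * k + 1) * hCoeff k := by
  simp only [h, F_sub_coth_mul_G_pi_div_four_eq_hCoeff]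

theorem hx_pi_div_four (x : ℝ) :
    hx x (π / 4) = 4 / π * ∑' k : ℕ, cos ((2 * k + 1) * x) * hCoeff k := by
  rw [hx, funext h_pi_div_four]
  refine ((hasDerivAt_tsum_sin_mul_div (fun k => by positivity) summable_geometric_quarter
    (fun k => ?_) x).const_mul _).deriv
  rw [abs_of_nonneg (hCoeff_nonneg k)]
  exact hCoeff_le k

def cosSign : ℕ → ℝ
  | 0 => 1
  | 1 => -1
  | k + 2 => -cosSign k

def sinSign : ℕ → ℝ
  | 0 => 1
  | 1 => 1
  | k + 2 => -sinSign k

theorem abs_cosSign : ∀ k, |cosSign k| = 1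
  | 0 => by simp [cosSign]
  | 1 => by simp [cosSign]
  | k + 2 => by rw [cosSign, abs_neg, abs_cosSign k]

theorem abs_sinSign : ∀ k, |sinSign k| = 1
  | 0 => by simp [sinSign]
  | 1 => by simp [sinSign]
  | k + 2 => by rw [sinSign, abs_neg, abs_sinSign k]

theorem odd_mul_pi_div_four_add_two (k : ℕ) :
    (2 * ((k + 2 : ℕ) : ℝ) + 1) * (π / 4) = (2 * k + 1) * (π / 4) + π := by
  push_cast; ring

theorem cos_odd_mul_pi_div_four : ∀ k : ℕ, cos ((2 * k + 1) * (π / 4)) = cosSign k * (√2 / 2)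
  | 0 => by simp [cosSign]
  | 1 => by
    rw [show (2 * ((1 : ℕ) : ℝ) + 1) * (π / 4) = π - π / 4 by push_cast; ring, cos_pi_sub]
    simp [cosSign]
  | k + 2 => by
    rw [odd_mul_pi_div_four_add_two, cos_add_pi, cos_odd_mul_pi_div_four k, cosSign, neg_mul]

theorem sin_odd_mul_pi_div_four : ∀ k : ℕ, sin ((2 * k + 1) * (π / 4)) = sinSign k * (√2 / 2)
  | 0 => by simp [sinSign]
  | 1 => by
    rw [show (2 * ((1 : ℕ) : ℝ) + 1) * (π / 4) = π - π / 4 by push_cast; ring, sin_pi_sub]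
    simp [sinSign]
  | k + 2 => by
    rw [odd_mul_pi_div_four_add_two, sin_add_pi, sin_odd_mul_pi_div_four k, sinSign, neg_mul]

theorem hx_div_h_pi_div_four :
    hx (π / 4) (π / 4) / h (π / 4) (π / 4) =
      (∑' k : ℕ, cosSign k * hCoeff k) / ∑' k : ℕ, sinSign k / (2 * k + 1) * hCoeff k := by
  have hc : 4 / π * (√2 / 2) ≠ 0 := by positivity
  have hcos (k : ℕ) : cosSign k * (√2 / 2) * hCoeff k = √2 / 2 * (cosSign k * hCoeff k) := by
    ring
  have hsin (k : ℕ) : sinSign k * (√2 / 2) / (2 * k + 1) * hCoeff k =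
      √2 / 2 * (sinSign k / (2 * k + 1) * hCoeff k) := by
    ring
  simp only [hx_pi_div_four, h_pi_div_four, cos_odd_mul_pi_div_four, sin_odd_mul_pi_div_four,
    hcos, hsin, tsum_mul_left]
  rw [← mul_assoc, ← mul_assoc]
  exact mul_div_mul_left _ _ hc

theorem abs_tsum_sub_sum_le_of_abs_le_geometric {f : ℕ → ℝ} {C r : ℝ} (hr0 : 0 ≤ r)
    (hr1 : r < 1) (hf : ∀ k, |f k| ≤ C * r ^ k) (N : ℕ) :
    |∑' k, f k - ∑ k ∈ Finset.range N, f k| ≤ C * r ^ N / (1 - r) := by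
  have hfs : Summable f :=
    .of_norm_bounded ((summable_geometric_of_lt_one hr0 hr1).mul_left C) hf
  rw [← hfs.sum_add_tsum_nat_add N, add_sub_cancel_left, ← norm_eq_abs, div_eq_mul_inv]
  refine tsum_of_norm_bounded ((hasSum_geometric_of_lt_one hr0 hr1).mul_left (C * r ^ N))
    fun k => ?_
  rw [norm_eq_abs, mul_assoc, ← pow_add, add_comm N]
  exact hf (k + N)

theorem tsum_mem_Icc_of_abs_le_geometric {f lo hi : ℕ → ℝ} {C r : ℝ} (hr0 : 0 ≤ r)
    (hr1 : r < 1) (hf : ∀ k, |f k| ≤ C * r ^ k) (hlohi : ∀ k, f k ∈ Icc (lo k) (hi k))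
    (N : ℕ) :
    ∑' k, f k ∈ Icc (∑ k ∈ Finset.range N, lo k - C * r ^ N / (1 - r))
      (∑ k ∈ Finset.range N, hi k + C * r ^ N / (1 - r)) := by
  have htail := abs_le.1 (abs_tsum_sub_sum_le_of_abs_le_geometric hr0 hr1 hf N)
  have hlo := Finset.sum_le_sum fun k (_ : k ∈ Finset.range N) => (hlohi k).1
  have hhi := Finset.sum_le_sum fun k (_ : k ∈ Finset.range N) => (hlohi k).2
  constructor <;> linarith [htail.1, htail.2]

theorem mul_mem_uIcc_of_mem_Icc {a lo hi : ℝ} (w : ℝ) (ha : a ∈ Icc lo hi) :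
    w * a ∈ uIcc (w * lo) (w * hi) :=
  image_const_mul_uIcc w lo hi ▸ mem_image_of_mem (w * ·) (Icc_subset_uIcc ha)

noncomputable def weight (c : ℝ) (k : ℕ) : ℝ := cosSign k - c * (sinSign k / (2 * k + 1))

theorem abs_sinSign_div_le_one (k : ℕ) : |sinSign k / (2 * k + 1)| ≤ 1 := by
  rw [abs_div, abs_sinSign, abs_of_pos (by positivity)]
  exact div_le_one_of_le₀ (by linarith [k.cast_nonneg (α := ℝ)]) (by positivity)

theorem abs_weight_le {c : ℝ} (hc : |c| ≤ 1) (k : ℕ) : |weight c k| ≤ 2 := by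
  have hprod : |c * (sinSign k / (2 * k + 1))| ≤ 1 := by
    rw [abs_mul]; exact mul_le_one₀ hc (abs_nonneg _) (abs_sinSign_div_le_one k)
  calc |weight c k| ≤ |cosSign k| + |c * (sinSign k / (2 * k + 1))| := abs_sub _ _
    _ ≤ 2 := by rw [abs_cosSign]; linarith

theorem summable_mul_hCoeff {s : ℕ → ℝ} {C : ℝ} (hs : ∀ k, |s k| ≤ C) :
    Summable fun k => s k * hCoeff k := by
  refine .of_norm_bounded (summable_geometric_quarter.mul_left C) fun k => ?_
  rw [norm_eq_abs, abs_mul, abs_of_nonneg (hCoeff_nonneg k)]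
  exact mul_le_mul (hs k) (hCoeff_le k) (hCoeff_nonneg k) ((abs_nonneg _).trans (hs k))

theorem tsum_weight_mul_hCoeff (c : ℝ) :
    ∑' k, weight c k * hCoeff k =
      ∑' k, cosSign k * hCoeff k - c * ∑' k : ℕ, sinSign k / (2 * k + 1) * hCoeff k := by
  simp only [weight, sub_mul, mul_assoc]
  rw [(summable_mul_hCoeff (fun k => (abs_cosSign k).le)).tsum_sub
    ((summable_mul_hCoeff abs_sinSign_div_le_one).mul_left c), tsum_mul_left]

theorem tsum_weight_mul_hCoeff_mem_Icc {c : ℝ} (hc : |c| ≤ 1) (N : ℕ) :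
    ∑' k, weight c k * hCoeff k ∈ Icc
      (∑ k ∈ Finset.range N, min (weight c k * quarticRatio (2.19329 ^ (2 * k + 1)))
        (weight c k * quarticRatio (2.19327 ^ (2 * k + 1))) - 2 * (1 / 4) ^ N / (1 - 1 / 4))
      (∑ k ∈ Finset.range N, max (weight c k * quarticRatio (2.19329 ^ (2 * k + 1)))
        (weight c k * quarticRatio (2.19327 ^ (2 * k + 1))) + 2 * (1 / 4) ^ N / (1 - 1 / 4)) := by
  refine tsum_mem_Icc_of_abs_le_geometric (by norm_num) (by norm_num) (fun k => ?_)
    (fun k => mul_mem_uIcc_of_mem_Icc _ (hCoeff_mem_Icc k)) N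
  rw [abs_mul, abs_of_nonneg (hCoeff_nonneg k)]
  exact mul_le_mul (abs_weight_le hc k) (hCoeff_le k) (hCoeff_nonneg k) zero_le_two

theorem tsum_weight_mul_hCoeff_pos : 0 < ∑' k, weight 0.7514 k * hCoeff k := by
  refine lt_of_lt_of_le ?_ (tsum_weight_mul_hCoeff_mem_Icc (by norm_num [abs_of_pos]) 10).1
  simp only [Finset.sum_range_succ, Finset.sum_range_zero, weight, cosSign, sinSign, quarticRatio]
  norm_num [min_def]

theorem tsum_weight_mul_hCoeff_neg : ∑' k, weight 0.7515 k * hCoeff k < 0 := by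
  refine lt_of_le_of_lt (tsum_weight_mul_hCoeff_mem_Icc (by norm_num [abs_of_pos]) 10).2 ?_
  simp only [Finset.sum_range_succ, Finset.sum_range_zero, weight, cosSign, sinSign, quarticRatio]
  norm_num [max_def]

theorem stmt1 :
    0.2485 < Real.cot (π / 4) - hx (π / 4) (π / 4) / h (π / 4) (π / 4) ∧
    Real.cot (π / 4) - hx (π / 4) (π / 4) / h (π / 4) (π / 4) < 0.2486 := by
  have hcot : cot (π / 4) = 1 := by
    rw [cot_eq_cos_div_sin, cos_pi_div_four, sin_pi_div_four, div_self (by positivity)]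
  have hlo := tsum_weight_mul_hCoeff_pos
  have hhi := tsum_weight_mul_hCoeff_neg
  rw [tsum_weight_mul_hCoeff] at hlo hhi
  rw [hcot, hx_div_h_pi_div_four]
  set D := ∑' k : ℕ, cosSign k * hCoeff k
  set S := ∑' k : ℕ, sinSign k / (2 * k + 1) * hCoeff k
  have hS : 0 < S := by linarith -- the difference of the two bounds is `0.0001 * S`
  have hratio_lt : D / S < 0.7515 := (div_lt_iff₀ hS).2 (by linarith)
  have hratio_gt : 0.7514 < D / S := (lt_div_iff₀ hS).2 (by linarith)
  constructor <;> linarith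
end

section
/- Let u₁ and u₂ be bounded harmonic functions on the open square (0,π)² ⊂ ℝ² such that at every point p of the boundary of the square other than the four corners, u₁ and u₂ have the same limit as z → p from inside the square. Then u₁ = u₂ on (0,π)². -/
/-!
Maximum principle with a barrier at the corners. Put `w = u₁ - u₂` and let
`B z = ∑_c (log (2π²) - log |z - c|²)` sum logarithmic poles at the four corners `c`: `B` is
harmonic in the square, nonnegative on the closed square off the corners and tends to `+∞` at
each corner. For `ε > 0` the function `w - ε (B - x²)` has Laplacian `2ε > 0`, hence no interior
local maximum; it tends to `-∞` at the corners because `w` is bounded, and its limits at the other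
boundary points are at most `επ²`. So it stays below `ε (π² + 1)` in the square, and letting
`ε → 0` gives `w ≤ 0`. Exchanging `u₁` and `u₂` gives equality.
-/

open Real Filter Set Topology

/-- The open square `(0,π)²`. -/
noncomputable def Sq : Set (ℝ × ℝ) := Set.Ioo 0 π ×ˢ Set.Ioo 0 π

/-- The four corners of the square `[0,π]²`. -/
noncomputable def corners : Set (ℝ × ℝ) := {(0, 0), (0, π), (π, 0), (π, π)}

/-- Second partial derivative in the first variable of a function on `ℝ²`. -/
noncomputable def pdxx (u : ℝ × ℝ → ℝ) (p : ℝ × ℝ) : ℝ :=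
  deriv (fun x => deriv (fun x' => u (x', p.2)) x) p.1

/-- Second partial derivative in the second variable of a function on `ℝ²`. -/
noncomputable def pdyy (u : ℝ × ℝ → ℝ) (p : ℝ × ℝ) : ℝ :=
  deriv (fun y => deriv (fun y' => u (p.1, y')) y) p.2

noncomputable def lap (u : ℝ × ℝ → ℝ) (p : ℝ × ℝ) : ℝ := pdxx u p + pdyy u p

section SecondPartials

variable {u v : ℝ × ℝ → ℝ} {p : ℝ × ℝ}

lemma pdyy_eq_pdxx_comp_swap : pdyy u p = pdxx (u ∘ Prod.swap) p.swap := rfl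

lemma pdxx_eq_iteratedDeriv : pdxx u p = iteratedDeriv 2 (fun x => u (x, p.2)) p.1 := by
  rw [iteratedDeriv_succ, iteratedDeriv_one]; rfl

lemma ContDiffAt.slice_fst {n : WithTop ℕ∞} (hu : ContDiffAt ℝ n u p) :
    ContDiffAt ℝ n (fun x => u (x, p.2)) p.1 :=
  hu.comp p.1 (contDiffAt_id.prodMk contDiffAt_const)

lemma ContDiffAt.comp_swap {n : WithTop ℕ∞} (hu : ContDiffAt ℝ n u p) :
    ContDiffAt ℝ n (u ∘ Prod.swap) p.swap :=
  hu.comp p.swap (contDiffAt_snd.prodMk contDiffAt_fst)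

lemma pdxx_sub (hu : ContDiffAt ℝ 2 u p) (hv : ContDiffAt ℝ 2 v p) :
    pdxx (fun z => u z - v z) p = pdxx u p - pdxx v p := by
  simp only [pdxx_eq_iteratedDeriv]
  exact iteratedDeriv_fun_sub hu.slice_fst hv.slice_fst

lemma pdxx_const_mul (c : ℝ) (hu : ContDiffAt ℝ 2 u p) :
    pdxx (fun z => c * u z) p = c * pdxx u p := by
  simp only [pdxx_eq_iteratedDeriv]
  exact iteratedDeriv_const_mul c hu.slice_fst

lemma pdxx_const_sub (c : ℝ) : pdxx (fun z => c - u z) p = -pdxx u p := by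
  simp only [pdxx_eq_iteratedDeriv]
  rw [iteratedDeriv_const_sub two_pos, iteratedDeriv_neg]

lemma pdxx_finset_sum {ι : Type*} (s : Finset ι) {f : ι → ℝ × ℝ → ℝ}
    (hf : ∀ i ∈ s, ContDiffAt ℝ 2 (f i) p) :
    pdxx (fun z => ∑ i ∈ s, f i z) p = ∑ i ∈ s, pdxx (f i) p := by
  simp only [pdxx_eq_iteratedDeriv]
  exact iteratedDeriv_fun_sum fun i hi => (hf i hi).slice_fst

lemma lap_sub (hu : ContDiffAt ℝ 2 u p) (hv : ContDiffAt ℝ 2 v p) :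
    lap (fun z => u z - v z) p = lap u p - lap v p := by
  have hy : pdyy (fun z => u z - v z) p = pdyy u p - pdyy v p :=
    pdxx_sub hu.comp_swap hv.comp_swap
  rw [lap, lap, lap, pdxx_sub hu hv, hy]
  ring

lemma lap_const_mul (c : ℝ) (hu : ContDiffAt ℝ 2 u p) :
    lap (fun z => c * u z) p = c * lap u p := by
  have hy : pdyy (fun z => c * u z) p = c * pdyy u p := pdxx_const_mul c hu.comp_swap
  rw [lap, lap, pdxx_const_mul c hu, hy]
  ring

lemma lap_const_sub (c : ℝ) : lap (fun z => c - u z) p = -lap u p := by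
  have hy : pdyy (fun z => c - u z) p = -pdyy u p :=
    pdxx_const_sub (u := u ∘ Prod.swap) (p := p.swap) c
  rw [lap, lap, pdxx_const_sub, hy]
  ring

lemma lap_finset_sum {ι : Type*} (s : Finset ι) {f : ι → ℝ × ℝ → ℝ}
    (hf : ∀ i ∈ s, ContDiffAt ℝ 2 (f i) p) :
    lap (fun z => ∑ i ∈ s, f i z) p = ∑ i ∈ s, lap (f i) p := by
  have hy : pdyy (fun z => ∑ i ∈ s, f i z) p = ∑ i ∈ s, pdyy (f i) p :=
    pdxx_finset_sum (f := fun i => f i ∘ Prod.swap) s fun i hi => (hf i hi).comp_swap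
  rw [lap, pdxx_finset_sum s hf, hy, ← Finset.sum_add_distrib]
  rfl

lemma lap_fst_sq : lap (fun z => z.1 ^ 2) p = 2 := by
  simp [lap, pdxx, pdyy]

theorem IsLocalMax.deriv_deriv_nonpos {f : ℝ → ℝ} {a : ℝ} (hmax : IsLocalMax f a)
    (hf : ContinuousAt f a) : deriv (deriv f) a ≤ 0 := by
  by_contra! hpos
  have hmin := isLocalMin_of_deriv_deriv_pos hpos hmax.deriv_eq_zero hf
  have hconst : f =ᶠ[𝓝 a] fun _ => f a :=
    (hmin.and hmax).mono fun x hx => le_antisymm hx.2 hx.1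
  exact hpos.ne' (by rw [hconst.deriv.deriv_eq]; simp)

lemma IsLocalMax.pdxx_nonpos (hmax : IsLocalMax u p) (hu : ContinuousAt u p) : pdxx u p ≤ 0 :=
  have hslice : ContinuousAt (fun x : ℝ => (x, p.2)) p.1 := by fun_prop
  IsLocalMax.deriv_deriv_nonpos (hmax.comp_continuous hslice) (hu.comp hslice)

lemma IsLocalMax.lap_nonpos (hmax : IsLocalMax u p) (hu : ContinuousAt u p) : lap u p ≤ 0 := by
  have hswap : IsLocalMax (u ∘ Prod.swap) p.swap :=
    hmax.comp_continuous continuous_swap.continuousAt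
  have := hswap.pdxx_nonpos (hu.comp continuous_swap.continuousAt)
  have := hmax.pdxx_nonpos hu
  rw [lap, pdyy_eq_pdxx_comp_swap]
  linarith

end SecondPartials

section LogDistSq

variable {c p z : ℝ × ℝ}

lemma sq_add_sq_sub_pos (h : z ≠ c) : 0 < (z.1 - c.1) ^ 2 + (z.2 - c.2) ^ 2 := by
  rcases eq_or_ne z.1 c.1 with h1 | h1
  · have : z.2 - c.2 ≠ 0 := sub_ne_zero.2 fun h2 => h (Prod.ext h1 h2)
    positivity
  · have : z.1 - c.1 ≠ 0 := sub_ne_zero.2 h1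
    positivity

lemma hasDerivAt_sq_sub_add (a k t : ℝ) :
    HasDerivAt (fun t => (t - a) ^ 2 + k) (2 * (t - a)) t := by
  simpa using (((hasDerivAt_id' t).sub_const a).fun_pow 2).add_const k

lemma hasDerivAt_log_sq_add (a : ℝ) {k : ℝ} (hk : 0 < k) (t : ℝ) :
    HasDerivAt (fun t => log ((t - a) ^ 2 + k)) (2 * (t - a) / ((t - a) ^ 2 + k)) t :=
  (hasDerivAt_sq_sub_add a k t).log (by positivity)

lemma deriv_deriv_log_sq_add (a : ℝ) {k : ℝ} (hk : 0 < k) (t : ℝ) :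
    deriv (deriv fun t => log ((t - a) ^ 2 + k)) t
      = 2 * (k - (t - a) ^ 2) / ((t - a) ^ 2 + k) ^ 2 := by
  rw [funext fun t => (hasDerivAt_log_sq_add a hk t).deriv]
  have hne : (t - a) ^ 2 + k ≠ 0 := by positivity
  have hnum : HasDerivAt (fun t => 2 * (t - a)) 2 t := by
    simpa using ((hasDerivAt_id' t).sub_const a).const_mul 2
  rw [(hnum.fun_div (hasDerivAt_sq_sub_add a k t) hne).deriv]
  field_simp
  ring

noncomputable def logDistSq (c z : ℝ × ℝ) : ℝ := log ((z.1 - c.1) ^ 2 + (z.2 - c.2) ^ 2)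

lemma logDistSq_comp_swap : logDistSq c ∘ Prod.swap = logDistSq c.swap := by
  funext z
  simp [logDistSq, add_comm]

lemma pdxx_logDistSq (h : p.2 ≠ c.2) :
    pdxx (logDistSq c) p = 2 * ((p.2 - c.2) ^ 2 - (p.1 - c.1) ^ 2)
      / ((p.1 - c.1) ^ 2 + (p.2 - c.2) ^ 2) ^ 2 :=
  deriv_deriv_log_sq_add c.1 (sq_pos_iff.2 (sub_ne_zero.2 h)) p.1

lemma lap_logDistSq (h1 : p.1 ≠ c.1) (h2 : p.2 ≠ c.2) : lap (logDistSq c) p = 0 := by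
  rw [lap, pdyy_eq_pdxx_comp_swap, logDistSq_comp_swap, pdxx_logDistSq h2,
    pdxx_logDistSq (c := c.swap) (p := p.swap) h1]
  simp only [Prod.fst_swap, Prod.snd_swap]
  rw [add_comm ((p.2 - c.2) ^ 2), ← add_div]
  ring

lemma contDiffAt_logDistSq (h : z ≠ c) : ContDiffAt ℝ 2 (logDistSq c) z :=
  ContDiffAt.log (by fun_prop) (sq_add_sq_sub_pos h).ne'

lemma tendsto_logDistSq_atBot (c : ℝ × ℝ) : Tendsto (logDistSq c) (𝓝[≠] c) atBot := by
  have hzero :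
      Tendsto (fun z : ℝ × ℝ => (z.1 - c.1) ^ 2 + (z.2 - c.2) ^ 2) (𝓝[≠] c) (𝓝[>] 0) := by
    refine tendsto_nhdsWithin_iff.2 ⟨?_, eventually_nhdsWithin_of_forall fun z hz => ?_⟩
    · have : Continuous fun z : ℝ × ℝ => (z.1 - c.1) ^ 2 + (z.2 - c.2) ^ 2 := by fun_prop
      simpa using (this.tendsto c).mono_left nhdsWithin_le_nhds
    · exact sq_add_sq_sub_pos hz
  exact tendsto_log_nhdsGT_zero.comp hzero

end LogDistSq

section Barrier

variable {c p z : ℝ × ℝ}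

lemma isOpen_Sq : IsOpen Sq := isOpen_Ioo.prod isOpen_Ioo

lemma closure_Sq : closure Sq = Icc 0 π ×ˢ Icc 0 π := by
  rw [Sq, closure_prod_eq, closure_Ioo pi_pos.ne]

lemma fst_sq_le_of_mem_closure (hz : z ∈ closure Sq) : z.1 ^ 2 ≤ π ^ 2 := by
  rw [closure_Sq] at hz
  nlinarith [hz.1.1, hz.1.2]

lemma corners_eq_prod : corners = ({0, π} : Set ℝ) ×ˢ {0, π} := by
  ext ⟨x, y⟩
  simp only [corners, mem_insert_iff, mem_singleton_iff, mem_prod, Prod.mk.injEq]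
  tauto

lemma fst_ne_and_snd_ne_of_mem_corners (hp : p ∈ Sq) (hc : c ∈ corners) :
    p.1 ≠ c.1 ∧ p.2 ≠ c.2 := by
  simp only [corners_eq_prod, mem_prod, mem_insert_iff, mem_singleton_iff] at hc
  obtain ⟨⟨hx₀, hxπ⟩, hy₀, hyπ⟩ := hp
  obtain ⟨hc₁ | hc₁, hc₂ | hc₂⟩ := hc <;> rw [hc₁, hc₂] <;>
    exact ⟨fun h => by linarith, fun h => by linarith⟩

lemma not_mem_corners_of_mem_Sq (hp : p ∈ Sq) : p ∉ corners :=
  fun hc => (fst_ne_and_snd_ne_of_mem_corners hp hc).1 rfl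

lemma corners_subset_closure_Sq : corners ⊆ closure Sq := by
  rw [corners_eq_prod, closure_Sq]
  have h : ({0, π} : Set ℝ) ⊆ Icc 0 π := by simp [insert_subset_iff, pi_pos.le]
  exact prod_mono h h

lemma logDistSq_le_of_mem_closure (hz : z ∈ closure Sq) (hc : c ∈ closure Sq) (h : z ≠ c) :
    logDistSq c z ≤ log (2 * π ^ 2) := by
  rw [closure_Sq] at hz hc
  obtain ⟨⟨hz₁, hz₁'⟩, hz₂, hz₂'⟩ := hz
  obtain ⟨⟨hc₁, hc₁'⟩, hc₂, hc₂'⟩ := hc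
  refine log_le_log (sq_add_sq_sub_pos h) ?_
  nlinarith

noncomputable def cornerFinset : Finset (ℝ × ℝ) := {0, π} ×ˢ {0, π}

lemma mem_cornerFinset : c ∈ cornerFinset ↔ c ∈ corners := by
  rw [← Finset.mem_coe, corners_eq_prod, cornerFinset, Finset.coe_product, Finset.coe_pair]

noncomputable def cornerBarrier (z : ℝ × ℝ) : ℝ :=
  ∑ c ∈ cornerFinset, (log (2 * π ^ 2) - logDistSq c z)

lemma contDiffAt_cornerBarrier (hz : z ∉ corners) : ContDiffAt ℝ 2 cornerBarrier z := by
  refine ContDiffAt.sum fun c hc => contDiffAt_const.sub (contDiffAt_logDistSq ?_)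
  rintro rfl
  exact hz (mem_cornerFinset.1 hc)

lemma lap_cornerBarrier (hp : p ∈ Sq) : lap cornerBarrier p = 0 := by
  have hsmooth : ∀ c ∈ cornerFinset,
      ContDiffAt ℝ 2 (fun z => log (2 * π ^ 2) - logDistSq c z) p := fun c hc =>
    contDiffAt_const.sub (contDiffAt_logDistSq fun h =>
      not_mem_corners_of_mem_Sq hp (h ▸ mem_cornerFinset.1 hc))
  unfold cornerBarrier
  rw [lap_finset_sum cornerFinset hsmooth]
  refine Finset.sum_eq_zero fun c hc => ?_
  obtain ⟨h1, h2⟩ := fst_ne_and_snd_ne_of_mem_corners hp (mem_cornerFinset.1 hc)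
  rw [lap_const_sub, lap_logDistSq h1 h2, neg_zero]

lemma log_sub_logDistSq_nonneg (hz : z ∈ closure Sq) (hz' : z ∉ corners) (hc : c ∈ corners) :
    0 ≤ log (2 * π ^ 2) - logDistSq c z :=
  sub_nonneg.2 <| logDistSq_le_of_mem_closure hz (corners_subset_closure_Sq hc)
    fun h => hz' (h ▸ hc)

lemma cornerBarrier_nonneg (hz : z ∈ closure Sq) (hz' : z ∉ corners) : 0 ≤ cornerBarrier z :=
  Finset.sum_nonneg fun _ hc => log_sub_logDistSq_nonneg hz hz' (mem_cornerFinset.1 hc)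

lemma tendsto_cornerBarrier_atTop (hc : c ∈ corners) :
    Tendsto cornerBarrier (𝓝[Sq] c) atTop := by
  have hSq : 𝓝[Sq] c ≤ 𝓝[≠] c :=
    nhdsWithin_mono c fun z hz h => not_mem_corners_of_mem_Sq hz (h ▸ hc)
  have hterm : Tendsto (fun z => log (2 * π ^ 2) - logDistSq c z) (𝓝[Sq] c) atTop :=
    tendsto_atTop_add_const_left _ _ (tendsto_neg_atBot_atTop.comp
      ((tendsto_logDistSq_atBot c).mono_left hSq))
  refine tendsto_atTop_mono' _ ?_ hterm
  filter_upwards [self_mem_nhdsWithin] with z hz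
  exact Finset.single_le_sum (f := fun c => log (2 * π ^ 2) - logDistSq c z)
    (fun c' hc' => log_sub_logDistSq_nonneg (subset_closure hz) (not_mem_corners_of_mem_Sq hz)
      (mem_cornerFinset.1 hc')) (mem_cornerFinset.2 hc)

end Barrier

theorem IsOpen.forall_lt_of_frontier {X α : Type*} [TopologicalSpace X] [LinearOrder α]
    [TopologicalSpace α] [OrderClosedTopology α] {U : Set X} {W : X → α} {c : α}
    (hU : IsOpen U) (hcpt : IsCompact (closure U)) (hW : ContinuousOn W U)
    (hmax : ∀ q ∈ U, ¬ IsLocalMax W q) (hbd : ∀ q ∈ frontier U, ∀ᶠ z in 𝓝[U] q, W z < c) :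
    ∀ z ∈ U, W z < c := by
  by_contra! h
  obtain ⟨p, hpU, hp⟩ := h
  set K := {z ∈ U | c ≤ W z}
  have hKU : K ⊆ U := sep_subset _ _
  have hK : IsClosed K := isClosed_of_closure_subset fun q hq => by
    have hne : (𝓝[K] q).NeBot := mem_closure_iff_nhdsWithin_neBot.1 hq
    have hcK : ∀ᶠ z in 𝓝[K] q, c ≤ W z := eventually_nhdsWithin_of_forall fun z hz => hz.2
    by_cases hqU : q ∈ U
    · exact ⟨hqU, ge_of_tendsto ((hW.continuousAt (hU.mem_nhds hqU)).tendsto.mono_left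
        nhdsWithin_le_nhds) hcK⟩
    · have hfr : q ∈ frontier U := ⟨closure_mono hKU hq, by rwa [hU.interior_eq]⟩
      obtain ⟨z, hlt, hle⟩ :=
        (((hbd q hfr).filter_mono (nhdsWithin_mono q hKU)).and hcK).exists
      exact absurd hle (not_le.2 hlt)
  have hKcpt : IsCompact K := hcpt.of_isClosed_subset hK (hKU.trans subset_closure)
  obtain ⟨q, hqK, hqmax⟩ := hKcpt.exists_isMaxOn ⟨p, hpU, hp⟩ (hW.mono hKU)
  refine hmax q hqK.1 ?_
  filter_upwards [hU.mem_nhds hqK.1] with z hz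
  by_cases hcz : c ≤ W z
  · exact hqmax ⟨hz, hcz⟩
  · exact (not_le.1 hcz).le.trans hqK.2

section Comparison

variable {w : ℝ × ℝ → ℝ} {ε : ℝ} {p q z : ℝ × ℝ}

lemma contDiffAt_cornerBarrier_sub_fst_sq (hz : z ∉ corners) :
    ContDiffAt ℝ 2 (fun z => cornerBarrier z - z.1 ^ 2) z :=
  (contDiffAt_cornerBarrier hz).sub (by fun_prop)

lemma lap_cornerBarrier_sub_fst_sq (hp : p ∈ Sq) :
    lap (fun z => cornerBarrier z - z.1 ^ 2) p = -2 := by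
  rw [lap_sub (contDiffAt_cornerBarrier (not_mem_corners_of_mem_Sq hp)) (by fun_prop),
    lap_cornerBarrier hp, lap_fst_sq]
  norm_num

lemma tendsto_sub_mul_cornerBarrier_atBot (hbdd : BddAbove (w '' Sq)) (hε : 0 < ε)
    (hq : q ∈ corners) :
    Tendsto (fun z => w z - ε * (cornerBarrier z - z.1 ^ 2)) (𝓝[Sq] q) atBot := by
  obtain ⟨M, hM⟩ := hbdd
  have hlow : Tendsto (fun z => M + ε * π ^ 2 + -(ε * cornerBarrier z)) (𝓝[Sq] q) atBot :=
    tendsto_atBot_add_const_left _ _ (tendsto_neg_atTop_atBot.comp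
      ((tendsto_cornerBarrier_atTop hq).const_mul_atTop hε))
  refine tendsto_atBot_mono' _ ?_ hlow
  filter_upwards [self_mem_nhdsWithin] with z hz
  have hwz := hM (mem_image_of_mem w hz)
  have := mul_le_mul_of_nonneg_left (fst_sq_le_of_mem_closure (subset_closure hz)) hε.le
  linarith

lemma sub_mul_cornerBarrier_lt (hw : ContDiffOn ℝ 2 w Sq) (hharm : ∀ p ∈ Sq, lap w p = 0)
    (hbdd : BddAbove (w '' Sq))
    (hbdry : ∀ q ∈ frontier Sq, q ∉ corners → Tendsto w (𝓝[Sq] q) (𝓝 0)) (hε : 0 < ε) :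
    ∀ z ∈ Sq, w z - ε * (cornerBarrier z - z.1 ^ 2) < ε * (π ^ 2 + 1) := by
  have hsmooth :
      ∀ z ∈ Sq, ContDiffAt ℝ 2 (fun z => w z - ε * (cornerBarrier z - z.1 ^ 2)) z :=
    fun z hz => (hw.contDiffAt (isOpen_Sq.mem_nhds hz)).sub <| contDiffAt_const.mul <|
      contDiffAt_cornerBarrier_sub_fst_sq (not_mem_corners_of_mem_Sq hz)
  have hcpt : IsCompact (closure Sq) := by
    rw [closure_Sq]
    exact isCompact_Icc.prod isCompact_Icc
  refine isOpen_Sq.forall_lt_of_frontier hcpt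
    (fun z hz => (hsmooth z hz).continuousAt.continuousWithinAt) (fun q hq hmax => ?_)
    (fun q hq => ?_)
  · have hlap : lap (fun z => w z - ε * (cornerBarrier z - z.1 ^ 2)) q = 2 * ε := by
      have hv := contDiffAt_cornerBarrier_sub_fst_sq (not_mem_corners_of_mem_Sq hq)
      rw [lap_sub (hw.contDiffAt (isOpen_Sq.mem_nhds hq)) (contDiffAt_const.mul hv),
        lap_const_mul ε hv, hharm q hq, lap_cornerBarrier_sub_fst_sq hq]
      ring
    have := hmax.lap_nonpos (hsmooth q hq).continuousAt
    linarith
  · by_cases hc : q ∈ corners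
    · exact (tendsto_sub_mul_cornerBarrier_atBot hbdd hε hc).eventually (eventually_lt_atBot _)
    · have hqcl : q ∈ closure Sq := frontier_subset_closure hq
      have hv := (contDiffAt_cornerBarrier_sub_fst_sq hc).continuousAt
      have hlim := (hbdry q hq hc).sub ((hv.const_mul ε).tendsto.mono_left nhdsWithin_le_nhds)
      refine hlim.eventually (gt_mem_nhds ?_)
      have := cornerBarrier_nonneg hqcl hc
      have := fst_sq_le_of_mem_closure hqcl
      nlinarith

theorem nonpos_of_tendsto_zero_off_corners (hw : ContDiffOn ℝ 2 w Sq)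
    (hharm : ∀ p ∈ Sq, lap w p = 0) (hbdd : BddAbove (w '' Sq))
    (hbdry : ∀ q ∈ frontier Sq, q ∉ corners → Tendsto w (𝓝[Sq] q) (𝓝 0)) :
    ∀ p ∈ Sq, w p ≤ 0 := by
  intro p hp
  have hlim :
      Tendsto (fun ε => ε * (π ^ 2 + 1 + (cornerBarrier p - p.1 ^ 2))) (𝓝[>] 0) (𝓝 0) := by
    simpa using ((continuous_mul_const _).tendsto (0 : ℝ)).mono_left nhdsWithin_le_nhds
  refine ge_of_tendsto hlim (eventually_nhdsWithin_of_forall fun ε hε => ?_)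
  have := sub_mul_cornerBarrier_lt hw hharm hbdd hbdry hε p hp
  rw [mul_add]
  linarith

end Comparison

theorem le_of_tendsto_nhdsWithin_eq {u₁ u₂ : ℝ × ℝ → ℝ}
    (hu₁ : ContDiffOn ℝ 2 u₁ Sq) (hu₂ : ContDiffOn ℝ 2 u₂ Sq)
    (hu₁harm : ∀ p ∈ Sq, lap u₁ p = 0) (hu₂harm : ∀ p ∈ Sq, lap u₂ p = 0)
    (hu₁bdd : ∃ M : ℝ, ∀ p ∈ Sq, |u₁ p| ≤ M) (hu₂bdd : ∃ M : ℝ, ∀ p ∈ Sq, |u₂ p| ≤ M)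
    (hbdry : ∀ p ∈ frontier Sq, p ∉ corners →
      ∃ L : ℝ, Tendsto u₁ (𝓝[Sq] p) (𝓝 L) ∧ Tendsto u₂ (𝓝[Sq] p) (𝓝 L)) :
    ∀ p ∈ Sq, u₁ p ≤ u₂ p := by
  obtain ⟨M₁, hM₁⟩ := hu₁bdd
  obtain ⟨M₂, hM₂⟩ := hu₂bdd
  have hharm : ∀ p ∈ Sq, lap (fun z => u₁ z - u₂ z) p = 0 := fun p hp => by
    have hp' := isOpen_Sq.mem_nhds hp
    rw [lap_sub (hu₁.contDiffAt hp') (hu₂.contDiffAt hp'), hu₁harm p hp, hu₂harm p hp, sub_zero]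
  have hbdd : BddAbove ((fun z => u₁ z - u₂ z) '' Sq) := by
    refine ⟨M₁ + M₂, ?_⟩
    rintro _ ⟨z, hz, rfl⟩
    linarith [abs_le.1 (hM₁ z hz), abs_le.1 (hM₂ z hz)]
  have hlim : ∀ q ∈ frontier Sq, q ∉ corners →
      Tendsto (fun z => u₁ z - u₂ z) (𝓝[Sq] q) (𝓝 0) := fun q hq hc => by
    obtain ⟨L, h₁, h₂⟩ := hbdry q hq hc
    simpa using h₁.sub h₂
  exact fun p hp =>
    sub_nonpos.1 (nonpos_of_tendsto_zero_off_corners (hu₁.sub hu₂) hharm hbdd hlim p hp)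

theorem stmt13 (u₁ u₂ : ℝ × ℝ → ℝ)
    (hu₁smooth : ContDiffOn ℝ 2 u₁ Sq) (hu₂smooth : ContDiffOn ℝ 2 u₂ Sq)
    (hu₁harm : ∀ p ∈ Sq, pdxx u₁ p + pdyy u₁ p = 0)
    (hu₂harm : ∀ p ∈ Sq, pdxx u₂ p + pdyy u₂ p = 0)
    (hu₁bdd : ∃ M : ℝ, ∀ p ∈ Sq, |u₁ p| ≤ M)
    (hu₂bdd : ∃ M : ℝ, ∀ p ∈ Sq, |u₂ p| ≤ M)
    (hbdry : ∀ p ∈ frontier Sq, p ∉ corners →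
      ∃ L : ℝ, Tendsto u₁ (𝓝[Sq] p) (𝓝 L) ∧ Tendsto u₂ (𝓝[Sq] p) (𝓝 L)) :
    Set.EqOn u₁ u₂ Sq := fun p hp =>
  le_antisymm
    (le_of_tendsto_nhdsWithin_eq hu₁smooth hu₂smooth hu₁harm hu₂harm hu₁bdd hu₂bdd hbdry p hp)
    (le_of_tendsto_nhdsWithin_eq hu₂smooth hu₁smooth hu₂harm hu₁harm hu₂bdd hu₁bdd
      (fun q hq hc => (hbdry q hq hc).imp fun _ h => h.symm) p hp)
end
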